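/- For all x > 0, the Gaussian Q-function Q(x) = (1/√(2π))∫_x^∞ e^{-t²/2} dt admits the integral representation (Craig's formula): Q(x) = (1/π)∫₀^{π/2} exp(-x²/(2 sin²θ)) dθ. -/

import Mathlib

open Real MeasureTheory Set intervalIntegral

/-- The Gaussian Q-function. -/
noncomputable def gaussQ (x : ℝ) : ℝ :=
  (1 / Real.sqrt (2 * Real.pi)) * ∫ t in Ioi x, Real.exp (-t ^ 2 / 2)

/-!
Fubini and polar coordinates for the Gaussian `exp (-(u² + v²) / 2)` on the half-plane `v > x`.
Integrating in Cartesian coordinates gives `√(2π) · √(2π) Q(x)`. In polar coordinates the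
half-plane is `r sin θ > x` with `0 < θ < π`, and the radial integral
`∫_{x / sin θ}^∞ r e^{-r²/2} dr` equals `exp (-x² / (2 sin² θ))`; the symmetry `θ ↦ π - θ` halves
the angular range.
-/

open Filter Topology

lemma exp_neg_sq_div_two (t : ℝ) : exp (-t ^ 2 / 2) = exp (-(1 / 2) * t ^ 2) := by
  ring_nf

lemma integral_exp_neg_sq_div_two : ∫ t : ℝ, exp (-t ^ 2 / 2) = √(2 * π) := by
  simp_rw [exp_neg_sq_div_two, integral_gaussian]
  congr 1
  field_simp

lemma integrable_mul_exp_neg_sq_div_two : Integrable fun t : ℝ => t * exp (-t ^ 2 / 2) := by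
  simpa only [exp_neg_sq_div_two] using integrable_mul_exp_neg_mul_sq (b := 1 / 2) (by norm_num)

lemma tendsto_exp_neg_sq_div_two_atTop :
    Tendsto (fun t : ℝ => exp (-t ^ 2 / 2)) atTop (𝓝 0) :=
  tendsto_exp_atBot.comp <| tendsto_neg_atTop_atBot.comp
    ((tendsto_pow_atTop two_ne_zero).atTop_div_const two_pos) |>.congr fun t => by simp [neg_div]

lemma integral_Ioi_mul_exp_neg_sq_div_two (a : ℝ) :
    ∫ t in Ioi a, t * exp (-t ^ 2 / 2) = exp (-a ^ 2 / 2) := by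
  have hderiv (t : ℝ) : HasDerivAt (fun t => -exp (-t ^ 2 / 2)) (t * exp (-t ^ 2 / 2)) t := by
    have h : HasDerivAt (fun t : ℝ => -t ^ 2 / 2) (-t) t :=
      ((hasDerivAt_pow 2 t).neg.div_const 2).congr_deriv (by ring)
    exact h.exp.neg.congr_deriv (by ring)
  rw [integral_Ioi_of_hasDerivAt_of_tendsto' (fun t _ => hderiv t)
    integrable_mul_exp_neg_sq_div_two.integrableOn
    (by simpa using tendsto_exp_neg_sq_div_two_atTop.neg)]
  ring

lemma integral_Ioi_zero_indicator_mul_exp_neg_sq_div_two {x : ℝ} (hx : 0 < x) (s : ℝ) :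
    ∫ r in Ioi 0, {r | x < r * s}.indicator (fun r => r * exp (-r ^ 2 / 2)) r =
      (Ioi 0).indicator (fun s => exp (-x ^ 2 / (2 * s ^ 2))) s := by
  have hmeas : MeasurableSet {r : ℝ | x < r * s} := measurableSet_lt measurable_const (by fun_prop)
  rw [setIntegral_indicator hmeas]
  rcases lt_or_ge 0 s with hs | hs
  · have hset : Ioi 0 ∩ {r | x < r * s} = Ioi (x / s) := by
      ext r
      simp only [mem_inter_iff, mem_Ioi, mem_ofPred_eq, div_lt_iff₀ hs]
      exact ⟨And.right, fun h => ⟨pos_of_mul_pos_left (hx.trans h) hs.le, h⟩⟩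
    rw [hset, integral_Ioi_mul_exp_neg_sq_div_two, indicator_of_mem (mem_Ioi.2 hs)]
    congr 1
    field_simp
  · have hset : Ioi 0 ∩ {r | x < r * s} = ∅ := by
      ext r
      simp only [mem_inter_iff, mem_Ioi, mem_ofPred_eq, mem_empty_iff_false, iff_false, not_and,
        not_lt]
      exact fun hr => (mul_nonpos_of_nonneg_of_nonpos hr.le hs).trans hx.le
    rw [hset, indicator_of_notMem (notMem_Ioi.2 hs), Measure.restrict_empty, integral_zero_measure]

lemma Ioo_neg_pi_pi_inter_sin_preimage_Ioi_zero : Ioo (-π) π ∩ sin ⁻¹' Ioi 0 = Ioo 0 π := by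
  ext θ
  simp only [mem_inter_iff, mem_Ioo, mem_preimage, mem_Ioi]
  constructor
  · rintro ⟨⟨hlo, hhi⟩, hsin⟩
    exact ⟨lt_of_not_ge fun h => (sin_nonpos_of_nonpos_of_neg_pi_le h hlo.le).not_gt hsin, hhi⟩
  · rintro ⟨hlo, hhi⟩
    exact ⟨⟨by linarith [pi_pos], hhi⟩, sin_pos_of_pos_of_lt_pi hlo hhi⟩

lemma integral_eq_two_mul_integral_half {f : ℝ → ℝ} {b : ℝ} (hf : ∀ t, f (b - t) = f t)
    (hint : IntervalIntegrable f volume 0 b) :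
    ∫ t in (0)..b, f t = 2 * ∫ t in (0)..(b / 2), f t := by
  have hmid : b / 2 ∈ uIcc 0 b := by
    rcases le_total 0 b with hb | hb
    · exact mem_uIcc.2 (Or.inl ⟨by linarith, by linarith⟩)
    · exact mem_uIcc.2 (Or.inr ⟨by linarith, by linarith⟩)
  rw [← integral_add_adjacent_intervals (b := b / 2)
    (hint.mono_set (uIcc_subset_uIcc left_mem_uIcc hmid))
    (hint.mono_set (uIcc_subset_uIcc hmid right_mem_uIcc))]
  have hreflect : ∫ t in (b / 2)..b, f t = ∫ t in (0)..(b / 2), f t := by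
    have h := integral_comp_sub_left (a := b / 2) (b := b) f b
    simp only [hf] at h
    rw [h]
    congr 1 <;> ring
  rw [hreflect]
  ring

lemma intervalIntegrable_exp_neg_sq_div_sin_sq (x a b : ℝ) :
    IntervalIntegrable (fun θ => exp (-x ^ 2 / (2 * sin θ ^ 2))) volume a b := by
  refine (intervalIntegrable_const (c := (1 : ℝ))).mono_fun'
    (Measurable.aestronglyMeasurable (by fun_prop)) (ae_of_all _ fun θ => ?_)
  dsimp only
  rw [norm_of_nonneg (exp_pos _).le, exp_le_one_iff]
  exact div_nonpos_of_nonpos_of_nonneg (neg_nonpos.2 (sq_nonneg x)) (by positivity)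

noncomputable def gaussianAbove (x : ℝ) (p : ℝ × ℝ) : ℝ :=
  exp (-p.1 ^ 2 / 2) * (Ioi x).indicator (fun v => exp (-v ^ 2 / 2)) p.2

lemma integral_gaussianAbove (x : ℝ) :
    ∫ p, gaussianAbove x p = √(2 * π) * ∫ t in Ioi x, exp (-t ^ 2 / 2) := by
  unfold gaussianAbove
  rw [Measure.volume_eq_prod, integral_prod_mul (f := fun u => exp (-u ^ 2 / 2))
    (g := (Ioi x).indicator fun v => exp (-v ^ 2 / 2)),
    integral_exp_neg_sq_div_two, MeasureTheory.integral_indicator measurableSet_Ioi]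

lemma mul_gaussianAbove_polarCoord_symm (x : ℝ) (p : ℝ × ℝ) :
    p.1 * gaussianAbove x (polarCoord.symm p) =
      {p : ℝ × ℝ | x < p.1 * sin p.2}.indicator (fun p => p.1 * exp (-p.1 ^ 2 / 2)) p := by
  obtain ⟨r, θ⟩ := p
  simp only [gaussianAbove, polarCoord_symm_apply, indicator_apply, mem_Ioi, mem_ofPred_eq]
  split_ifs
  · rw [← mul_assoc, mul_assoc r, ← exp_add]
    congr 2
    linear_combination (-r ^ 2 / 2) * sin_sq_add_cos_sq θ
  · ring

lemma integral_polarCoord_target_gaussianAbove {x : ℝ} (hx : 0 < x) :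
    ∫ p in polarCoord.target, p.1 • gaussianAbove x (polarCoord.symm p) =
      ∫ θ in Ioo 0 π, exp (-x ^ 2 / (2 * sin θ ^ 2)) := by
  have hmeas : MeasurableSet {p : ℝ × ℝ | x < p.1 * sin p.2} :=
    measurableSet_lt measurable_const (by fun_prop)
  have hint : Integrable ({p : ℝ × ℝ | x < p.1 * sin p.2}.indicator
      (fun p => p.1 * exp (-p.1 ^ 2 / 2)))
      ((volume.restrict (Ioi 0)).prod (volume.restrict (Ioo (-π) π))) :=
    (integrable_mul_exp_neg_sq_div_two.restrict.comp_fst _).indicator hmeas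
  simp_rw [smul_eq_mul, mul_gaussianAbove_polarCoord_symm, polarCoord_target,
    Measure.volume_eq_prod, ← Measure.prod_restrict, integral_prod_symm _ hint]
  calc ∫ θ in Ioo (-π) π, ∫ r in Ioi 0,
        {p : ℝ × ℝ | x < p.1 * sin p.2}.indicator (fun p => p.1 * exp (-p.1 ^ 2 / 2)) (r, θ)
      = ∫ θ in Ioo (-π) π, (Ioi 0).indicator (fun s => exp (-x ^ 2 / (2 * s ^ 2))) (sin θ) :=
        setIntegral_congr_fun measurableSet_Ioo fun θ _ =>
          integral_Ioi_zero_indicator_mul_exp_neg_sq_div_two hx (sin θ)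
    _ = ∫ θ in Ioo (-π) π ∩ sin ⁻¹' Ioi 0, exp (-x ^ 2 / (2 * sin θ ^ 2)) := by
        rw [← setIntegral_indicator (measurableSet_Ioi.preimage continuous_sin.measurable)]
        rfl
    _ = ∫ θ in Ioo 0 π, exp (-x ^ 2 / (2 * sin θ ^ 2)) := by
        rw [Ioo_neg_pi_pi_inter_sin_preimage_Ioi_zero]

/-- Craig's formula: for all `x > 0`,
`Q(x) = (1/π) ∫₀^{π/2} exp(-x²/(2 sin²θ)) dθ`. -/
theorem stmt_12 (x : ℝ) (hx : 0 < x) :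
    gaussQ x = (1 / Real.pi) * ∫ θ in (0 : ℝ)..(Real.pi / 2),
      Real.exp (-x ^ 2 / (2 * Real.sin θ ^ 2)) := by
  set I := ∫ θ in (0 : ℝ)..(π / 2), exp (-x ^ 2 / (2 * sin θ ^ 2))
  have hplane : √(2 * π) * ∫ t in Ioi x, exp (-t ^ 2 / 2) = 2 * I := by
    rw [← integral_gaussianAbove, ← integral_comp_polarCoord_symm,
      integral_polarCoord_target_gaussianAbove hx, ← integral_Ioc_eq_integral_Ioo,
      ← integral_of_le pi_pos.le]
    exact integral_eq_two_mul_integral_half (fun θ => by rw [sin_pi_sub])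
      (intervalIntegrable_exp_neg_sq_div_sin_sq x 0 π)
  have hsqrt : √(2 * π) ^ 2 = 2 * π := sq_sqrt (by positivity)
  calc gaussQ x = √(2 * π) * (∫ t in Ioi x, exp (-t ^ 2 / 2)) / √(2 * π) ^ 2 := by
        rw [gaussQ]
        field_simp
    _ = 1 / π * I := by
        rw [hplane, hsqrt]
        field_simp
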